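/- arXiv:0811.4669 — 5 statements merged into one kernel-verified Lean document; each statement's English description precedes it below -/
import Mathlib

section
/- In the Lie algebra so(n,1) ⊗ Q, the elements Q_i = (E_{i,n+1} + E_{n+1,i}) ⊗ λ̄i satisfy [Q_i,[Q_j,Q_k]] = 0 whenever i, j, k are pairwise distinct. -/
open MvPolynomial Matrix

noncomputable section

/-- The ideal generated by the polynomials `λᵢ² − λⱼ² + rᵢ − rⱼ`. -/
def LLIdeal (n : ℕ) (r : Fin n → ℂ) : Ideal (MvPolynomial (Fin n) ℂ) :=
  Ideal.span {p | ∃ i j : Fin n, p = X i ^ 2 - X j ^ 2 + C (r i) - C (r j)}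

/-- The algebra `Q` of polynomial functions on the curve. -/
abbrev LLQ (n : ℕ) (r : Fin n → ℂ) : Type := MvPolynomial (Fin n) ℂ ⧸ LLIdeal n r

/-- `λ̄ᵢ`, the image of `λᵢ` in `Q`. -/
def lamQ (n : ℕ) (r : Fin n → ℂ) (i : Fin n) : LLQ n r :=
  Ideal.Quotient.mk _ (X i)

/-- `λ̄ = λ̄ᵢ² + rᵢ` (independent of `i`). -/
def lambar (n : ℕ) (r : Fin n → ℂ) [NeZero n] : LLQ n r :=
  lamQ n r 0 ^ 2 + algebraMap ℂ _ (r 0)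

/-- Matrices of size `n+1` over `Q`; contains `so(n,1) ⊗ Q` with its commutator
Lie bracket. -/
abbrev LLM (n : ℕ) (r : Fin n → ℂ) : Type := Matrix (Fin (n+1)) (Fin (n+1)) (LLQ n r)

/-- `Q_i = (E_{i,n+1} + E_{n+1,i}) ⊗ λ̄ᵢ`. -/
def Qgen (n : ℕ) (r : Fin n → ℂ) (i : Fin n) : LLM n r :=
  lamQ n r i • (single i.castSucc (Fin.last n) 1 + single (Fin.last n) i.castSucc 1)

/-- `Q^{2k-1}_l = (E_{l,n+1} + E_{n+1,l}) ⊗ λ̄^{k-1} λ̄_l`. -/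
def Qodd (n : ℕ) (r : Fin n → ℂ) [NeZero n] (k : ℕ) (l : Fin n) : LLM n r :=
  (lambar n r ^ (k-1) * lamQ n r l) •
    (single l.castSucc (Fin.last n) 1 + single (Fin.last n) l.castSucc 1)

/-- `Q^{2k}_{ij} = (E_{i,j} − E_{j,i}) ⊗ λ̄^{k-1} λ̄ᵢ λ̄ⱼ`. -/
def Qeven (n : ℕ) (r : Fin n → ℂ) [NeZero n] (k : ℕ) (i j : Fin n) : LLM n r :=
  (lambar n r ^ (k-1) * lamQ n r i * lamQ n r j) •
    (single i.castSucc j.castSucc 1 - single j.castSucc i.castSucc 1)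

end

/-! With `l = n+1`, the bracket of two boosts `E_{y,l} + E_{l,y}` and `E_{z,l} + E_{l,z}`
is the rotation `E_{y,z} − E_{z,y}`, and a boost in a third direction `x` commutes with that
rotation since no index of the one matches an index of the other. The coefficients `λ̄ᵢ` just
factor out by bilinearity. -/

theorem Ring.smul_lie_smul {R A : Type*} [CommSemiring R] [Ring A] [Algebra R A] (a b : R)
    (x y : A) : ⁅a • x, b • y⁆ = (a * b) • ⁅x, y⁆ := by
  simp only [Ring.lie_def, smul_mul_smul_comm, mul_comm b a, smul_sub]

namespace Matrix

variable {ι R : Type*} [Fintype ι] [DecidableEq ι] [CommRing R]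

theorem lie_single_add_single_single_add_single {y z l : ι}
    (hyz : y ≠ z) (hyl : y ≠ l) (hzl : z ≠ l) :
    ⁅single y l (1 : R) + single l y 1, single z l (1 : R) + single l z 1⁆ =
      single y z (1 : R) - single z y 1 := by
  simp only [Ring.lie_def, Matrix.add_mul, Matrix.mul_add, single_mul_single_same,
    single_mul_single_of_ne, hyz, hyz.symm, hyl, hyl.symm, hzl, hzl.symm, ne_eq, not_false_iff,
    mul_one, add_zero, zero_add]

theorem lie_single_add_single_single_sub_single {x y z l : ι}
    (hxy : x ≠ y) (hxz : x ≠ z) (hyl : y ≠ l) (hzl : z ≠ l) :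
    ⁅single x l (1 : R) + single l x 1, single y z (1 : R) - single z y 1⁆ = 0 := by
  simp only [Ring.lie_def, Matrix.add_mul, Matrix.mul_sub, Matrix.sub_mul, Matrix.mul_add,
    single_mul_single_of_ne, hxy, hxy.symm, hxz, hxz.symm, hyl, hyl.symm, hzl, hzl.symm, ne_eq,
    not_false_iff, sub_self, add_zero]

theorem lie_boost_lie_boost_boost_eq_zero (a b c : R) {x y z l : ι}
    (hxy : x ≠ y) (hxz : x ≠ z) (hyz : y ≠ z) (hyl : y ≠ l) (hzl : z ≠ l) :
    ⁅a • (single x l (1 : R) + single l x 1),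
      ⁅b • (single y l (1 : R) + single l y 1), c • (single z l (1 : R) + single l z 1)⁆⁆ = 0 := by
  rw [Ring.smul_lie_smul b c, lie_single_add_single_single_add_single hyz hyl hzl,
    Ring.smul_lie_smul, lie_single_add_single_single_sub_single hxy hxz hyl hzl, smul_zero]

end Matrix

theorem stmt_3_general (n : ℕ) (r : Fin n → ℂ) :
    ∀ i j k : Fin n, i ≠ j → i ≠ k → j ≠ k →
      ⁅Qgen n r i, ⁅Qgen n r j, Qgen n r k⁆⁆ = 0 := by
  intro i j k hij hik hjk
  exact lie_boost_lie_boost_boost_eq_zero _ _ _ (Fin.castSucc_injective n |>.ne hij)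
    (Fin.castSucc_injective n |>.ne hik) (Fin.castSucc_injective n |>.ne hjk)
    (Fin.castSucc_lt_last j).ne (Fin.castSucc_lt_last k).ne

theorem stmt_3 (n : ℕ) [NeZero n] (hn : 3 ≤ n) (r : Fin n → ℂ) (hr : Function.Injective r) :
    ∀ i j k : Fin n, i ≠ j → i ≠ k → j ≠ k →
      ⁅Qgen n r i, ⁅Qgen n r j, Qgen n r k⁆⁆ = 0 :=
  stmt_3_general n r
end

section
/- For all i ≠ j and k1, k2 ≥ 1, one has [Q^{2k1−1}_i, Q^{2k2−1}_j] = Q^{2(k1+k2−1)}_{ij} and [Q^{2k1−1}_i, Q^{2k2−1}_i] = 0, where Q^{2k−1}_l = (E_{l,n+1} + E_{n+1,l}) ⊗ λ̄^{k−1}λ̄l and Q^{2k}_{ij} = (E_{i,j} − E_{j,i}) ⊗ λ̄^{k−1}λ̄iλ̄j in so(n,1) ⊗ Q. -/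
open MvPolynomial Matrix

/-!
The bracket on matrices over a commutative ring is bilinear over that ring, so each bracket of
odd generators is the product of their coefficients times the bracket of the constant matrices
`Sₗ = E_{l,n+1} + E_{n+1,l}`. Since `Sᵢ Sⱼ = E_{ij}` for `i ≠ j`, one gets `⁅Sᵢ, Sⱼ⁆ = E_{ij} - E_{ji}`,
while `⁅Sᵢ, Sᵢ⁆ = 0`; the coefficients multiply to `λ̄^{k₁+k₂-2} λ̄ᵢ λ̄ⱼ`.
-/

namespace Matrix

variable {m α : Type*} [DecidableEq m] [Fintype m]

theorem single_add_single_mul_single_add_single [NonAssocSemiring α] {a b c : m}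
    (hab : a ≠ b) (hac : a ≠ c) (hbc : b ≠ c) :
    (single a c (1 : α) + single c a 1) * (single b c 1 + single c b 1) = single a b 1 := by
  simp [add_mul, mul_add, hab, hac, hbc.symm]

theorem lie_single_add_single [Ring α] {a b c : m} (hab : a ≠ b) (hac : a ≠ c) (hbc : b ≠ c) :
    ⁅single a c (1 : α) + single c a 1, single b c (1 : α) + single c b 1⁆ =
      single a b 1 - single b a 1 := by
  rw [Ring.lie_def, single_add_single_mul_single_add_single hab hac hbc,
    single_add_single_mul_single_add_single hab.symm hbc hac]

theorem smul_lie_smul [CommRing α] (a b : α) (M N : Matrix m m α) :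
    ⁅a • M, b • N⁆ = (a * b) • ⁅M, N⁆ := by
  rw [Ring.lie_def, Ring.lie_def, smul_mul_smul_comm, smul_mul_smul_comm, mul_comm b, smul_sub]

end Matrix

theorem pow_pred_mul_mul_pow_pred_mul {M : Type*} [CommMonoid M] (t x y : M) {k₁ k₂ : ℕ}
    (hk₁ : 1 ≤ k₁) (hk₂ : 1 ≤ k₂) :
    t ^ (k₁ - 1) * x * (t ^ (k₂ - 1) * y) = t ^ (k₁ + k₂ - 1 - 1) * x * y := by
  rw [show k₁ + k₂ - 1 - 1 = k₁ - 1 + (k₂ - 1) by omega, pow_add]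
  ac_rfl

theorem stmt_6_general (n : ℕ) [NeZero n] (r : Fin n → ℂ) :
    ∀ (i j : Fin n) (k₁ k₂ : ℕ), 1 ≤ k₁ → 1 ≤ k₂ →
      (i ≠ j → ⁅Qodd n r k₁ i, Qodd n r k₂ j⁆ = Qeven n r (k₁ + k₂ - 1) i j) ∧
      ⁅Qodd n r k₁ i, Qodd n r k₂ i⁆ = 0 := by
  intro i j k₁ k₂ hk₁ hk₂
  refine ⟨fun hij => ?_, ?_⟩
  · rw [Qodd, Qodd, Matrix.smul_lie_smul, Matrix.lie_single_add_single
      ((Fin.castSucc_injective n).ne hij) (Fin.castSucc_lt_last i).ne (Fin.castSucc_lt_last j).ne,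
      pow_pred_mul_mul_pow_pred_mul _ _ _ hk₁ hk₂, Qeven]
  · rw [Qodd, Qodd, Matrix.smul_lie_smul, Ring.lie_def, sub_self, smul_zero]

theorem stmt_6 (n : ℕ) [NeZero n] (hn : 3 ≤ n) (r : Fin n → ℂ) (hr : Function.Injective r) :
    ∀ (i j : Fin n) (k₁ k₂ : ℕ), 1 ≤ k₁ → 1 ≤ k₂ →
      (i ≠ j → ⁅Qodd n r k₁ i, Qodd n r k₂ j⁆ = Qeven n r (k₁ + k₂ - 1) i j) ∧
      ⁅Qodd n r k₁ i, Qodd n r k₂ i⁆ = 0 :=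
  stmt_6_general n r
end

section
/- The Lie subalgebra L(n) ⊂ so(n,1) ⊗ Q generated by Q_1,...,Q_n is spanned (as a C-vector space) by the elements Q^{2k−1}_l (l = 1,...,n, k ≥ 1) and Q^{2k}_{ij} (1 ≤ i < j ≤ n, k ≥ 1). -/
open MvPolynomial Matrix

attribute [local instance] LieRing.ofAssociativeRing

/-!
Write `A_l = E_{l,n+1} + E_{n+1,l}` and `B_{ij} = E_{ij} - E_{ji}`. In `so(n,1)` one has
`[A_l, A_m] = B_{lm}`, `[A_j, B_{ij}] = -A_i` for `i ≠ j`, and `[A_l, B_{ij}] = 0` for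
`l ∉ {i, j}`; together with `λ̄_j² = λ̄ - r_j` this gives
`[Q_m, Q^{2k-1}_l] = Q^{2k}_{ml}` and `[Q_j, Q^{2k}_{ij}] = r_j Q^{2k-1}_i - Q^{2k+1}_i`.
Hence the span `S` of the `Q^{2k-1}_l` and `Q^{2k}_{ij}` contains the generators and is stable
under every `ad Q_m`, which forces it to contain the Lie algebra they generate. Read backwards,
with some `j ≠ i` (so `n ≥ 2`), the same identities produce every element of the spanning set from
the generators, by induction on `k`.
-/

theorem LieSubalgebra.lieSpan_le_of_lie_mem {R L : Type*} [CommRing R] [LieRing L]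
    [LieAlgebra R L] {s : Set L} {V : Submodule R L} (hs : s ⊆ V)
    (hV : ∀ x ∈ s, ∀ v ∈ V, ⁅x, v⁆ ∈ V) : (lieSpan R L s : Set L) ⊆ V := by
  -- By the Jacobi identity, the elements of `V` whose adjoint action preserves `V` form a Lie
  -- subalgebra.
  let K : LieSubalgebra R L :=
    { carrier := {y | y ∈ V ∧ ∀ v ∈ V, ⁅y, v⁆ ∈ V}
      add_mem' := fun hy hz => ⟨add_mem hy.1 hz.1, fun v hv => by
        rw [add_lie]; exact add_mem (hy.2 v hv) (hz.2 v hv)⟩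
      zero_mem' := ⟨zero_mem V, fun v _ => by rw [zero_lie]; exact zero_mem V⟩
      smul_mem' := fun c _ hy => ⟨V.smul_mem c hy.1, fun v hv => by
        rw [smul_lie]; exact V.smul_mem c (hy.2 v hv)⟩
      lie_mem' := fun {y z} hy hz => ⟨hy.2 z hz.1, fun v hv => by
        rw [lie_lie]; exact sub_mem (hy.2 _ (hz.2 v hv)) (hz.2 _ (hy.2 v hv))⟩ }
  exact fun y hy => (lieSpan_le (K := K) |>.2 (fun x hx => ⟨hs hx, hV x hx⟩) hy).1

theorem Matrix.lie_smul_smul {A m : Type*} [CommRing A] [Fintype m] [DecidableEq m]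
    (a b : A) (M N : Matrix m m A) : ⁅a • M, b • N⁆ = (a * b) • ⁅M, N⁆ := by
  rw [smul_lie, lie_smul, smul_smul]

section LorentzBasis

variable (R : Type*) [Ring R] {n : ℕ}

def boostMatrix (l : Fin n) : Matrix (Fin (n+1)) (Fin (n+1)) R :=
  single l.castSucc (Fin.last n) 1 + single (Fin.last n) l.castSucc 1

def rotationMatrix (i j : Fin n) : Matrix (Fin (n+1)) (Fin (n+1)) R :=
  single i.castSucc j.castSucc 1 - single j.castSucc i.castSucc 1

theorem rotationMatrix_swap (i j : Fin n) : rotationMatrix R j i = -rotationMatrix R i j := by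
  simp [rotationMatrix]

theorem rotationMatrix_self (i : Fin n) : rotationMatrix R i i = 0 := by
  simp [rotationMatrix]

theorem lie_boostMatrix_boostMatrix (l m : Fin n) :
    ⁅boostMatrix R l, boostMatrix R m⁆ = rotationMatrix R l m := by
  rcases eq_or_ne l m with rfl | hlm
  · rw [lie_self, rotationMatrix_self]
  · simp [boostMatrix, rotationMatrix, Ring.lie_def, Matrix.add_mul, Matrix.mul_add, hlm,
      hlm.symm, (Fin.castSucc_ne_last _).symm]

theorem lie_boostMatrix_rotationMatrix_right {i j : Fin n} (hij : i ≠ j) :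
    ⁅boostMatrix R j, rotationMatrix R i j⁆ = -boostMatrix R i := by
  simp [boostMatrix, rotationMatrix, Ring.lie_def, Matrix.add_mul, Matrix.mul_add,
    Matrix.sub_mul, Matrix.mul_sub, hij, hij.symm, (Fin.castSucc_ne_last _).symm]
  abel

theorem lie_boostMatrix_rotationMatrix_of_ne {i j l : Fin n} (hli : l ≠ i) (hlj : l ≠ j) :
    ⁅boostMatrix R l, rotationMatrix R i j⁆ = 0 := by
  simp [boostMatrix, rotationMatrix, Ring.lie_def, Matrix.add_mul, Matrix.mul_add,
    Matrix.sub_mul, Matrix.mul_sub, hli, hli.symm, hlj, hlj.symm, (Fin.castSucc_ne_last _).symm]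

end LorentzBasis

section CurrentAlgebra

variable (n : ℕ) (r : Fin n → ℂ)

theorem Qgen_eq_smul (i : Fin n) : Qgen n r i = lamQ n r i • boostMatrix _ i := rfl

theorem Qgen_mem_lieSpan (l : Fin n) :
    Qgen n r l ∈ LieSubalgebra.lieSpan ℂ (LLM n r) (Set.range (Qgen n r)) :=
  LieSubalgebra.subset_lieSpan ⟨l, rfl⟩

variable [NeZero n]

theorem lamQ_sq (i : Fin n) : lamQ n r i ^ 2 = lambar n r - algebraMap ℂ _ (r i) := by
  have h : Ideal.Quotient.mk (LLIdeal n r) (X i ^ 2 - X 0 ^ 2 + C (r i) - C (r 0)) = 0 :=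
    Ideal.Quotient.eq_zero_iff_mem.2 (Ideal.subset_span ⟨i, 0, rfl⟩)
  rw [lambar, lamQ, lamQ]
  simp only [map_sub, map_add, map_pow, ← MvPolynomial.algebraMap_eq,
    Ideal.Quotient.mk_algebraMap] at h
  linear_combination h

theorem Qodd_succ (k : ℕ) (l : Fin n) :
    Qodd n r (k + 1) l = (lambar n r ^ k * lamQ n r l) • boostMatrix _ l := rfl

theorem Qeven_succ (k : ℕ) (i j : Fin n) :
    Qeven n r (k + 1) i j = (lambar n r ^ k * lamQ n r i * lamQ n r j) • rotationMatrix _ i j :=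
  rfl

theorem Qodd_one (l : Fin n) : Qodd n r 1 l = Qgen n r l := by
  rw [Qodd_succ, Qgen_eq_smul, pow_zero, one_mul]

theorem Qeven_eq_smul (k : ℕ) (i j : Fin n) :
    Qeven n r k i j = (lambar n r ^ (k - 1) * lamQ n r i * lamQ n r j) • rotationMatrix _ i j :=
  rfl

theorem Qeven_swap (k : ℕ) (i j : Fin n) : Qeven n r k j i = -Qeven n r k i j := by
  rw [Qeven_eq_smul, Qeven_eq_smul, rotationMatrix_swap, smul_neg, mul_right_comm]

theorem Qeven_self (k : ℕ) (i : Fin n) : Qeven n r k i i = 0 := by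
  rw [Qeven_eq_smul, rotationMatrix_self, smul_zero]

theorem lie_Qgen_Qodd (k : ℕ) (m l : Fin n) :
    ⁅Qgen n r m, Qodd n r (k + 1) l⁆ = Qeven n r (k + 1) m l := by
  rw [Qgen_eq_smul, Qodd_succ, Matrix.lie_smul_smul, lie_boostMatrix_boostMatrix, Qeven_succ]
  ring_nf

theorem lie_Qgen_Qeven_right (k : ℕ) {i j : Fin n} (hij : i ≠ j) :
    ⁅Qgen n r j, Qeven n r (k + 1) i j⁆ = r j • Qodd n r (k + 1) i - Qodd n r (k + 2) i := by
  rw [Qgen_eq_smul, Qeven_succ, Matrix.lie_smul_smul, lie_boostMatrix_rotationMatrix_right _ hij,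
    Qodd_succ, Qodd_succ]
  match_scalars
  linear_combination (-(lambar n r ^ k * lamQ n r i)) * lamQ_sq n r j

theorem lie_Qgen_Qeven_of_ne (k : ℕ) {i j l : Fin n} (hli : l ≠ i) (hlj : l ≠ j) :
    ⁅Qgen n r l, Qeven n r k i j⁆ = 0 := by
  rw [Qgen_eq_smul, Qeven_eq_smul, Matrix.lie_smul_smul,
    lie_boostMatrix_rotationMatrix_of_ne _ hli hlj, smul_zero]

noncomputable def spanQ : Submodule ℂ (LLM n r) :=
  Submodule.span ℂ
    ({y | ∃ (k : ℕ) (l : Fin n), 1 ≤ k ∧ y = Qodd n r k l} ∪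
     {y | ∃ (k : ℕ) (i j : Fin n), 1 ≤ k ∧ i < j ∧ y = Qeven n r k i j})

theorem Qodd_mem_spanQ (k : ℕ) (l : Fin n) : Qodd n r (k + 1) l ∈ spanQ n r :=
  Submodule.subset_span (Or.inl ⟨k + 1, l, k.succ_pos, rfl⟩)

theorem Qeven_mem_spanQ (k : ℕ) (i j : Fin n) : Qeven n r (k + 1) i j ∈ spanQ n r := by
  rcases lt_trichotomy i j with hij | rfl | hji
  · exact Submodule.subset_span (Or.inr ⟨k + 1, i, j, k.succ_pos, hij, rfl⟩)
  · rw [Qeven_self]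
    exact zero_mem _
  · rw [Qeven_swap, neg_mem_iff]
    exact Submodule.subset_span (Or.inr ⟨k + 1, j, i, k.succ_pos, hji, rfl⟩)

theorem lie_Qgen_Qeven_mem_spanQ (k : ℕ) (l : Fin n) {i j : Fin n} (hij : i ≠ j) :
    ⁅Qgen n r l, Qeven n r (k + 1) i j⁆ ∈ spanQ n r := by
  have hodd : ∀ i' j', r j' • Qodd n r (k + 1) i' - Qodd n r (k + 2) i' ∈ spanQ n r :=
    fun i' j' => sub_mem (Submodule.smul_mem _ _ (Qodd_mem_spanQ n r k i'))
      (Qodd_mem_spanQ n r (k + 1) i')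
  rcases eq_or_ne l j with rfl | hlj
  · rw [lie_Qgen_Qeven_right n r k hij]
    exact hodd i l
  rcases eq_or_ne l i with rfl | hli
  · rw [← neg_neg (Qeven n r _ l j), ← Qeven_swap, lie_neg, lie_Qgen_Qeven_right n r k hij.symm,
      neg_mem_iff]
    exact hodd j l
  · rw [lie_Qgen_Qeven_of_ne n r _ hli hlj]
    exact zero_mem _

theorem lie_Qgen_mem_spanQ (m : Fin n) {v : LLM n r} (hv : v ∈ spanQ n r) :
    ⁅Qgen n r m, v⁆ ∈ spanQ n r := by
  suffices spanQ n r ≤ (spanQ n r).comap (LieAlgebra.ad ℂ _ (Qgen n r m)) from this hv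
  refine Submodule.span_le.2 fun y hy => ?_
  rw [SetLike.mem_coe, Submodule.mem_comap, LieAlgebra.ad_apply]
  rcases hy with ⟨_ | k, l, hk, rfl⟩ | ⟨_ | k, i, j, hk, hij, rfl⟩
  · omega
  · rw [lie_Qgen_Qodd]
    exact Qeven_mem_spanQ n r k m l
  · omega
  · exact lie_Qgen_Qeven_mem_spanQ n r k m hij.ne

theorem lieSpan_Qgen_le_spanQ :
    (LieSubalgebra.lieSpan ℂ (LLM n r) (Set.range (Qgen n r)) : Set (LLM n r)) ⊆ spanQ n r :=
  LieSubalgebra.lieSpan_le_of_lie_mem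
    (by rintro _ ⟨l, rfl⟩; exact Qodd_one n r l ▸ Qodd_mem_spanQ n r 0 l)
    (by rintro _ ⟨m, rfl⟩ v hv; exact lie_Qgen_mem_spanQ n r m hv)

theorem Qeven_mem_lieSpan_of_Qodd_mem {k : ℕ} {i : Fin n}
    (hi : Qodd n r (k + 1) i ∈ LieSubalgebra.lieSpan ℂ (LLM n r) (Set.range (Qgen n r)))
    (j : Fin n) :
    Qeven n r (k + 1) i j ∈ LieSubalgebra.lieSpan ℂ (LLM n r) (Set.range (Qgen n r)) := by
  rw [← neg_neg (Qeven n r (k + 1) i j), ← Qeven_swap, ← lie_Qgen_Qodd]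
  exact neg_mem (LieSubalgebra.lie_mem _ (Qgen_mem_lieSpan n r j) hi)

theorem Qodd_mem_lieSpan (hn : 2 ≤ n) (k : ℕ) (l : Fin n) :
    Qodd n r (k + 1) l ∈ LieSubalgebra.lieSpan ℂ (LLM n r) (Set.range (Qgen n r)) := by
  have : Nontrivial (Fin n) := Fin.nontrivial_iff_two_le.2 hn
  induction k generalizing l with
  | zero => exact Qodd_one n r l ▸ Qgen_mem_lieSpan n r l
  | succ k ih =>
    obtain ⟨j, hjl⟩ := exists_ne l
    show Qodd n r (k + 2) l ∈ _
    rw [← sub_sub_cancel (r j • Qodd n r (k + 1) l) (Qodd n r (k + 2) l),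
      ← lie_Qgen_Qeven_right n r k hjl.symm]
    exact sub_mem (LieSubalgebra.smul_mem _ _ (ih l)) (LieSubalgebra.lie_mem _
      (Qgen_mem_lieSpan n r j) (Qeven_mem_lieSpan_of_Qodd_mem n r (ih l) j))

theorem spanQ_le_lieSpan (hn : 2 ≤ n) :
    spanQ n r ≤ (LieSubalgebra.lieSpan ℂ (LLM n r) (Set.range (Qgen n r))).toSubmodule := by
  refine Submodule.span_le.2 ?_
  rintro _ (⟨_ | k, l, hk, rfl⟩ | ⟨_ | k, i, j, hk, -, rfl⟩)
  · omega
  · exact Qodd_mem_lieSpan n r hn k l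
  · omega
  · exact Qeven_mem_lieSpan_of_Qodd_mem n r (Qodd_mem_lieSpan n r hn k i) j

end CurrentAlgebra

theorem stmt_8_general (n : ℕ) [NeZero n] (hn : 3 ≤ n) (r : Fin n → ℂ) :
    ∀ x : LLM n r,
      x ∈ LieSubalgebra.lieSpan ℂ (LLM n r) (Set.range (Qgen n r)) ↔
      x ∈ Submodule.span ℂ
        ({y | ∃ (k : ℕ) (l : Fin n), 1 ≤ k ∧ y = Qodd n r k l} ∪
         {y | ∃ (k : ℕ) (i j : Fin n), 1 ≤ k ∧ i < j ∧ y = Qeven n r k i j}) :=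
  fun _ => ⟨fun hx => lieSpan_Qgen_le_spanQ n r hx, fun hx => spanQ_le_lieSpan n r (by omega) hx⟩

theorem stmt_8 (n : ℕ) [NeZero n] (hn : 3 ≤ n) (r : Fin n → ℂ) (hr : Function.Injective r) :
    ∀ x : LLM n r,
      x ∈ LieSubalgebra.lieSpan ℂ (LLM n r) (Set.range (Qgen n r)) ↔
      x ∈ Submodule.span ℂ
        ({y | ∃ (k : ℕ) (l : Fin n), 1 ≤ k ∧ y = Qodd n r k l} ∪
         {y | ∃ (k : ℕ) (i j : Fin n), 1 ≤ k ∧ i < j ∧ y = Qeven n r k i j}) :=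
  stmt_8_general n hn r
end

section
/- Setting L̄_{2k−1} = span{Q^{2k−1}_l : l = 1,...,n} and L̄_{2k} = span{Q^{2k}_{ij} : i < j}, the Lie algebra L(n) decomposes as L(n) = ⊕_{m≥1} L̄_m and is quasigraded: [L̄_i, L̄_j] ⊆ L̄_{i+j} + L̄_{i+j−2} for all i, j ≥ 1 (with L̄_0 = L̄_{−1} = 0). Moreover dim L̄_{2k−1} = n and dim L̄_{2k} = n(n−1)/2 for every k ≥ 1. -/
open MvPolynomial Matrix

attribute [local instance 100] LieRing.ofAssociativeRing

/-!
Every element of `L̄_{2k+1}` is a combination of the boosts `E_{l,n+1} + E_{n+1,l}` with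
coefficients in `ℂ λ̄^k λ̄_l`, and every element of `L̄_{2k+2}` a combination of the rotations
`E_{ij} − E_{ji}` with coefficients in `ℂ λ̄^k λ̄_i λ̄_j`. Bracketing with the `so(n,1)` relations
multiplies the coefficients, and a repeated index contributes `λ̄_j² = λ̄ − r_j`, which splits
into degrees `i + j` and `i + j − 2`: this is the quasigrading. The same identity, read
backwards, produces every `Q^m` from the generators `Q_i = Q^1_i` by brackets.

Directness and the dimensions follow from the linear independence of all the `Q^m` together.
Reading off the entry `(l, n+1)`, resp. `(i, j)` with `i < j`, reduces it to the independence
of `λ̄^k w` (`k ∈ ℕ`) for `w = λ̄_l` or `w = λ̄_i λ̄_j`. For `c ∉ {r_1, …, r_n}` there is a point of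
the curve where `λ̄ = c` and `w ≠ 0`, so a linear relation gives a polynomial in `c` with
infinitely many roots.
-/

open Submodule in
theorem LinearIndependent.iSupIndep_span_fiber {R M ι κ : Type*} [Ring R] [AddCommGroup M]
    [Module R M] {v : ι → M} (hv : LinearIndependent R v) (f : ι → κ) :
    iSupIndep fun m => span R (v '' (f ⁻¹' {m})) := by
  intro m
  refine (hv.disjoint_span_image (s := f ⁻¹' {m}) (t := (f ⁻¹' {m})ᶜ)
    disjoint_compl_right).mono_right (iSup₂_le fun m' hm' => span_mono ?_)
  exact Set.image_mono fun i hi => by simp_all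

open Submodule in
theorem Submodule.iSup_span_image_preimage_singleton {R M ι κ : Type*} [Semiring R]
    [AddCommMonoid M] [Module R M] (v : ι → M) (f : ι → κ) :
    ⨆ m, span R (v '' (f ⁻¹' {m})) = span R (Set.range v) := by
  simp only [← span_iUnion, ← Set.image_iUnion, ← Set.preimage_iUnion, Set.iUnion_of_singleton,
    Set.preimage_univ, Set.image_univ]

open Submodule in
theorem lie_mem_of_mem_span {R L : Type*} [CommRing R] [LieRing L] [LieAlgebra R L]
    {s t : Set L} {N : Submodule R L} (h : ∀ x ∈ s, ∀ y ∈ t, ⁅x, y⁆ ∈ N) {x y : L}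
    (hx : x ∈ span R s) (hy : y ∈ span R t) : ⁅x, y⁆ ∈ N := by
  induction hx, hy using span_induction₂ with
  | mem_mem x y hx hy => exact h x hx y hy
  | zero_left y hy => simp
  | zero_right x hx => simp
  | add_left x y z _ _ _ hx hy => simpa using add_mem hx hy
  | add_right x y z _ _ _ hx hy => simpa using add_mem hx hy
  | smul_left r x y _ _ h => simpa using N.smul_mem r h
  | smul_right r x y _ _ h => simpa using N.smul_mem r h

open Submodule in
theorem LieSubalgebra.lieSpan_le_span {R L : Type*} [CommRing R] [LieRing L] [LieAlgebra R L]
    {s t : Set L} (hst : s ⊆ span R t) (ht : ∀ x ∈ t, ∀ y ∈ t, ⁅x, y⁆ ∈ span R t) :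
    (lieSpan R L s : Submodule R L) ≤ span R t := by
  let K : LieSubalgebra R L :=
    { span R t with lie_mem' := fun hx hy => lie_mem_of_mem_span ht hx hy }
  exact (lieSpan_le (K := K)).mpr hst

theorem linearIndependent_pow_mul_of_infinite {K A : Type*} [Field K] [CommRing A] [Algebra K A]
    {x w : A} (h : {c : K | ∃ φ : A →ₐ[K] K, φ x = c ∧ φ w ≠ 0}.Infinite) :
    LinearIndependent K fun k : ℕ => x ^ k * w := by
  let T : Polynomial K →ₗ[K] A :=
    LinearMap.mulRight K w ∘ₗ (Polynomial.aeval x).toLinearMap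
  have hT : Function.Injective T := by
    refine (injective_iff_map_eq_zero T).mpr fun p hp => p.eq_zero_of_infinite_isRoot ?_
    refine h.mono ?_
    rintro _ ⟨φ, rfl, hφ⟩
    have := congrArg φ hp
    simp only [T, LinearMap.comp_apply, LinearMap.mulRight_apply, AlgHom.toLinearMap_apply,
      map_mul, map_zero, mul_eq_zero, hφ, or_false] at this
    rwa [← Polynomial.aeval_algHom_apply, Polynomial.coe_aeval_eq_eval] at this
  have hv : (fun k : ℕ => x ^ k * w) = T ∘ Polynomial.basisMonomials K := by
    ext k
    simp [T, Polynomial.coe_basisMonomials, ← Polynomial.X_pow_eq_monomial]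
  rw [hv]
  exact (Polynomial.basisMonomials K).linearIndependent.map' T (LinearMap.ker_eq_bot.mpr hT)

theorem Matrix.smul_lie_smul_s9 {R ι : Type*} [CommRing R] [Fintype ι] [DecidableEq ι] (a b : R)
    (A B : Matrix ι ι R) : ⁅a • A, b • B⁆ = (a * b) • ⁅A, B⁆ := by
  rw [Ring.lie_def, Ring.lie_def, Matrix.smul_mul, Matrix.mul_smul, Matrix.smul_mul,
    Matrix.mul_smul, smul_smul, smul_smul, mul_comm b a, smul_sub]

theorem Matrix.single_mul_single_eq_ite {ι α : Type*} [Fintype ι] [DecidableEq ι] [Semiring α]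
    (i j k l : ι) (a b : α) :
    single i j a * single k l b = if j = k then single i l (a * b) else 0 := by
  split_ifs with h
  · subst h
    simp
  · simp [h]

noncomputable section

namespace LL

section MatrixUnits

variable {R : Type*} [Ring R] {n : ℕ}

variable (R) in
def boostUnit (l : Fin n) : Matrix (Fin (n + 1)) (Fin (n + 1)) R :=
  single l.castSucc (Fin.last n) 1 + single (Fin.last n) l.castSucc 1

variable (R) in
def rotUnit (i j : Fin n) : Matrix (Fin (n + 1)) (Fin (n + 1)) R :=
  single i.castSucc j.castSucc 1 - single j.castSucc i.castSucc 1

lemma rotUnit_self (i : Fin n) : rotUnit R i i = 0 := sub_self _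

lemma rotUnit_swap (i j : Fin n) : rotUnit R j i = -rotUnit R i j := (neg_sub _ _).symm

lemma lie_boostUnit_boostUnit (a b : Fin n) :
    ⁅boostUnit R a, boostUnit R b⁆ = rotUnit R a b := by
  simp only [Ring.lie_def, boostUnit, rotUnit, add_mul, mul_add, single_mul_single_eq_ite,
    mul_one, Fin.castSucc_inj, Fin.castSucc_ne_last, (Fin.castSucc_ne_last _).symm, ↓reduceIte]
  split_ifs <;> subst_vars <;> simp_all

lemma lie_rotUnit_boostUnit (i j l : Fin n) :
    ⁅rotUnit R i j, boostUnit R l⁆ =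
      (if j = l then boostUnit R i else 0) - (if i = l then boostUnit R j else 0) := by
  simp only [Ring.lie_def, boostUnit, rotUnit, add_mul, mul_add, sub_mul, mul_sub,
    single_mul_single_eq_ite, mul_one, Fin.castSucc_inj, Fin.castSucc_ne_last,
    (Fin.castSucc_ne_last _).symm, ↓reduceIte]
  split_ifs <;> subst_vars <;> simp_all
  abel

lemma lie_rotUnit_rotUnit (i j l m : Fin n) :
    ⁅rotUnit R i j, rotUnit R l m⁆ =
      (if j = l then rotUnit R i m else 0) - (if j = m then rotUnit R i l else 0) -
        (if i = l then rotUnit R j m else 0) + (if i = m then rotUnit R j l else 0) := by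
  simp only [Ring.lie_def, rotUnit, sub_mul, mul_sub, single_mul_single_eq_ite, mul_one,
    Fin.castSucc_inj]
  split_ifs <;> subst_vars <;> simp_all <;> abel

end MatrixUnits

variable {n : ℕ} {r : Fin n → ℂ}

lemma exists_algHom_lamQ_sq (c : ℂ) :
    ∃ φ : LLQ n r →ₐ[ℂ] ℂ, ∀ i, φ (lamQ n r i) ^ 2 = c - r i := by
  choose s hs using fun i => IsAlgClosed.exists_pow_nat_eq (c - r i) two_pos
  have hI : ∀ p ∈ LLIdeal n r, aeval s p = 0 := by
    refine fun p hp => (Ideal.span_le (I := RingHom.ker (aeval s).toRingHom)).mpr ?_ hp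
    rintro _ ⟨i, j, rfl⟩
    simp only [SetLike.mem_coe, RingHom.mem_ker, AlgHom.toRingHom_eq_coe, RingHom.coe_coe,
      map_sub, map_add, map_pow, aeval_X, aeval_C, hs, Algebra.algebraMap_self, RingHom.id_apply]
    ring
  refine ⟨Ideal.Quotient.liftₐ _ (aeval s) hI, fun i => ?_⟩
  have := AlgHom.congr_fun (Ideal.Quotient.liftₐ_comp (LLIdeal n r) (aeval s) hI) (X i)
  simp only [AlgHom.comp_apply, aeval_X] at this
  rw [lamQ, ← Ideal.Quotient.mkₐ_eq_mk ℂ, this, hs]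

variable [NeZero n]

lemma lamQ_sq (j : Fin n) : lamQ n r j ^ 2 = lambar n r - algebraMap ℂ _ (r j) := by
  have h : Ideal.Quotient.mk (LLIdeal n r) (X j ^ 2 - X 0 ^ 2 + C (r j) - C (r 0)) = 0 :=
    Ideal.Quotient.eq_zero_iff_mem.mpr (Ideal.subset_span ⟨j, 0, rfl⟩)
  simp only [map_sub, map_add, map_pow, ← MvPolynomial.algebraMap_eq,
    Ideal.Quotient.mk_algebraMap] at h
  simp only [lambar, lamQ]
  linear_combination h

lemma algHom_lambar_eq_of_lamQ_eq_zero (φ : LLQ n r →ₐ[ℂ] ℂ) {i : Fin n}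
    (h : φ (lamQ n r i) = 0) : φ (lambar n r) = r i := by
  have := congrArg φ (lamQ_sq (r := r) i)
  simp only [map_pow, h, map_sub, AlgHom.commutes] at this
  linear_combination -this

lemma linearIndependent_lambar_pow_mul {w : LLQ n r}
    (hw : ∀ φ : LLQ n r →ₐ[ℂ] ℂ, φ w = 0 → φ (lambar n r) ∈ Set.range r) :
    LinearIndependent ℂ fun k : ℕ => lambar n r ^ k * w := by
  refine linearIndependent_pow_mul_of_infinite ((Set.finite_range r).infinite_compl.mono ?_)
  intro c hc
  obtain ⟨φ, hφ⟩ := exists_algHom_lamQ_sq (r := r) c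
  have hφc : φ (lambar n r) = c := by simp [lambar, hφ]
  exact ⟨φ, hφc, fun h0 => hc (hφc ▸ hw φ h0)⟩

lemma Qodd_succ (k : ℕ) (l : Fin n) :
    Qodd n r (k + 1) l = (lambar n r ^ k * lamQ n r l) • boostUnit (LLQ n r) l := rfl

lemma Qeven_succ (k : ℕ) (i j : Fin n) :
    Qeven n r (k + 1) i j = (lambar n r ^ k * lamQ n r i * lamQ n r j) • rotUnit (LLQ n r) i j :=
  rfl

lemma Qgen_eq_Qodd_one : Qgen n r = Qodd n r 1 := by
  ext1 i
  simp [Qgen, Qodd]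

lemma Qeven_self (k : ℕ) (i : Fin n) : Qeven n r k i i = 0 := by
  change (_ * _ * _) • rotUnit (LLQ n r) i i = 0
  rw [rotUnit_self, smul_zero]

lemma Qeven_swap (k : ℕ) (i j : Fin n) : Qeven n r k j i = -Qeven n r k i j := by
  change (_ * _ * _) • rotUnit (LLQ n r) j i = -((_ * _ * _) • rotUnit (LLQ n r) i j)
  rw [rotUnit_swap, smul_neg, mul_right_comm]

lemma Qodd_sub_smul_Qodd (k : ℕ) (c : ℂ) (l : Fin n) :
    Qodd n r (k + 2) l - c • Qodd n r (k + 1) l =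
      ((lambar n r - algebraMap ℂ _ c) * lambar n r ^ k * lamQ n r l) • boostUnit (LLQ n r) l := by
  rw [← algebraMap_smul (LLQ n r) c, Qodd_succ, Qodd_succ]
  ext a b
  simp only [Matrix.sub_apply, Matrix.smul_apply, smul_eq_mul]
  ring

lemma Qeven_sub_smul_Qeven (k : ℕ) (c : ℂ) (i j : Fin n) :
    Qeven n r (k + 2) i j - c • Qeven n r (k + 1) i j =
      ((lambar n r - algebraMap ℂ _ c) * lambar n r ^ k * lamQ n r i * lamQ n r j) •
        rotUnit (LLQ n r) i j := by
  rw [← algebraMap_smul (LLQ n r) c, Qeven_succ, Qeven_succ]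
  ext a b
  simp only [Matrix.sub_apply, Matrix.smul_apply, smul_eq_mul]
  ring

lemma lie_Qodd_Qodd (k k' : ℕ) (a b : Fin n) :
    ⁅Qodd n r (k + 1) a, Qodd n r (k' + 1) b⁆ = Qeven n r (k + k' + 1) a b := by
  rw [Qodd_succ, Qodd_succ, Qeven_succ, Matrix.smul_lie_smul_s9, lie_boostUnit_boostUnit, pow_add]
  congr 1
  ring

lemma lie_Qeven_Qodd (k k' : ℕ) (i j l : Fin n) :
    ⁅Qeven n r (k + 1) i j, Qodd n r (k' + 1) l⁆ =
      (if j = l then Qodd n r (k + k' + 2) i - r j • Qodd n r (k + k' + 1) i else 0) -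
        (if i = l then Qodd n r (k + k' + 2) j - r i • Qodd n r (k + k' + 1) j else 0) := by
  rw [Qeven_succ, Qodd_succ, Matrix.smul_lie_smul_s9, lie_rotUnit_boostUnit, Qodd_sub_smul_Qodd,
    Qodd_sub_smul_Qodd, ← lamQ_sq, ← lamQ_sq]
  split_ifs <;> subst_vars <;> ext a b <;>
    simp only [Matrix.sub_apply, Matrix.smul_apply, Matrix.zero_apply, smul_eq_mul] <;> ring

lemma lie_Qeven_Qeven (k k' : ℕ) (i j l m : Fin n) :
    ⁅Qeven n r (k + 1) i j, Qeven n r (k' + 1) l m⁆ =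
      (if j = l then Qeven n r (k + k' + 2) i m - r j • Qeven n r (k + k' + 1) i m else 0) -
        (if j = m then Qeven n r (k + k' + 2) i l - r j • Qeven n r (k + k' + 1) i l else 0) -
        (if i = l then Qeven n r (k + k' + 2) j m - r i • Qeven n r (k + k' + 1) j m else 0) +
        (if i = m then Qeven n r (k + k' + 2) j l - r i • Qeven n r (k + k' + 1) j l else 0) := by
  rw [Qeven_succ, Qeven_succ, Matrix.smul_lie_smul_s9, lie_rotUnit_rotUnit]
  simp only [Qeven_sub_smul_Qeven, ← lamQ_sq]
  split_ifs <;> subst_vars <;> ext a b <;>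
    simp only [Matrix.add_apply, Matrix.sub_apply, Matrix.smul_apply, Matrix.zero_apply,
      smul_eq_mul] <;> ring

variable (n) in
abbrev BasisIdx : Type := Fin n ⊕ {p : Fin n × Fin n // p.1 < p.2}

/- `(.inl l, k)` stands for `Q^{2k+1}_l` and `(.inr (i, j), k)` for `Q^{2k+2}_{ij}`. -/
variable (n r) in
def gradedBasis : BasisIdx n × ℕ → LLM n r
  | (.inl l, k) => Qodd n r (k + 1) l
  | (.inr p, k) => Qeven n r (k + 1) p.1.1 p.1.2

variable (n) in
def basisDeg : BasisIdx n × ℕ → ℕ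
  | (.inl _, k) => 2 * k + 1
  | (.inr _, k) => 2 * k + 2

variable (n r) in
def basisWeight : BasisIdx n → LLQ n r
  | .inl l => lamQ n r l
  | .inr p => lamQ n r p.1.1 * lamQ n r p.1.2

variable (n r) in
def entryMap : LLM n r →ₗ[ℂ] BasisIdx n → LLQ n r :=
  LinearMap.pi fun
    | .inl l => entryLinearMap ℂ (LLQ n r) l.castSucc (Fin.last n)
    | .inr p => entryLinearMap ℂ (LLQ n r) p.1.1.castSucc p.1.2.castSucc

lemma entryMap_gradedBasis (a : BasisIdx n) (k : ℕ) :
    entryMap n r (gradedBasis n r (a, k)) = Pi.single a (lambar n r ^ k * basisWeight n r a) := by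
  ext b
  rcases a with l | ⟨⟨i, j⟩, hij⟩ <;> rcases b with l' | ⟨⟨i', j'⟩, hij'⟩ <;>
    simp [entryMap, gradedBasis, basisWeight, Qodd, Qeven, Matrix.single_apply,
      Fin.castSucc_ne_last, (Fin.castSucc_ne_last _).symm, Pi.single_apply]
  · simp only [eq_comm (a := l)]
  · have hswap : ¬(j = i' ∧ i = j') := by
      rintro ⟨rfl, rfl⟩
      exact lt_asymm hij hij'
    simp only [hswap, ↓reduceIte, sub_zero, eq_comm (a := i'), eq_comm (a := j')]
    split_ifs <;> ring

lemma algHom_basisWeight_eq_zero (φ : LLQ n r →ₐ[ℂ] ℂ) (a : BasisIdx n)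
    (h : φ (basisWeight n r a) = 0) : φ (lambar n r) ∈ Set.range r := by
  rcases a with l | ⟨⟨i, j⟩, _⟩
  · exact ⟨l, (algHom_lambar_eq_of_lamQ_eq_zero φ h).symm⟩
  · rcases mul_eq_zero.mp ((map_mul φ _ _).symm.trans h) with h | h
    · exact ⟨i, (algHom_lambar_eq_of_lamQ_eq_zero φ h).symm⟩
    · exact ⟨j, (algHom_lambar_eq_of_lamQ_eq_zero φ h).symm⟩

lemma linearIndependent_gradedBasis : LinearIndependent ℂ (gradedBasis n r) := by
  refine LinearIndependent.of_comp (entryMap n r) ?_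
  rw [← linearIndependent_equiv (Equiv.sigmaEquivProd (BasisIdx n) ℕ)]
  have h : (entryMap n r ∘ gradedBasis n r) ∘ Equiv.sigmaEquivProd (BasisIdx n) ℕ =
      fun x => Pi.single x.1 (lambar n r ^ x.2 * basisWeight n r x.1) :=
    funext fun x => entryMap_gradedBasis x.1 x.2
  rw [h]
  exact Pi.linearIndependent_single (fun a (k : ℕ) => lambar n r ^ k * basisWeight n r a)
    fun a => linearIndependent_lambar_pow_mul (algHom_basisWeight_eq_zero · a)

open Submodule LieSubalgebra

variable (n r) in
def gradedPiece (m : ℕ) : Submodule ℂ (LLM n r) :=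
  span ℂ (gradedBasis n r '' (basisDeg n ⁻¹' {m}))

lemma iSupIndep_gradedPiece : iSupIndep (gradedPiece n r) :=
  linearIndependent_gradedBasis.iSupIndep_span_fiber (basisDeg n)

lemma iSup_gradedPiece : ⨆ m, gradedPiece n r m = span ℂ (Set.range (gradedBasis n r)) :=
  iSup_span_image_preimage_singleton _ _

lemma gradedPiece_zero : gradedPiece n r 0 = ⊥ := by
  rw [gradedPiece, span_eq_bot]
  rintro _ ⟨⟨_ | _, _⟩, h, rfl⟩ <;> simp [basisDeg] at h

lemma gradedBasis_image_odd (k : ℕ) :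
    gradedBasis n r '' (basisDeg n ⁻¹' {2 * k + 1}) = {y | ∃ l, y = Qodd n r (k + 1) l} := by
  ext y
  constructor
  · rintro ⟨⟨l | _, k'⟩, h, rfl⟩ <;>
      simp only [basisDeg, Set.mem_preimage, Set.mem_singleton_iff] at h
    · obtain rfl : k' = k := by omega
      exact ⟨l, rfl⟩
    · omega
  · rintro ⟨l, rfl⟩
    exact ⟨(.inl l, k), rfl, rfl⟩

lemma gradedBasis_image_even (k : ℕ) :
    gradedBasis n r '' (basisDeg n ⁻¹' {2 * k + 2}) =
      {y | ∃ i j, i < j ∧ y = Qeven n r (k + 1) i j} := by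
  ext y
  constructor
  · rintro ⟨⟨_ | ⟨⟨i, j⟩, hij⟩, k'⟩, h, rfl⟩ <;>
      simp only [basisDeg, Set.mem_preimage, Set.mem_singleton_iff] at h
    · omega
    · obtain rfl : k' = k := by omega
      exact ⟨i, j, hij, rfl⟩
  · rintro ⟨i, j, hij, rfl⟩
    exact ⟨(.inr ⟨(i, j), hij⟩, k), rfl, rfl⟩

lemma eq_gradedPiece (L : ℕ → Submodule ℂ (LLM n r)) (h0 : L 0 = ⊥)
    (hodd : ∀ k, 1 ≤ k → L (2 * k - 1) = span ℂ {y | ∃ l, y = Qodd n r k l})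
    (heven : ∀ k, 1 ≤ k → L (2 * k) = span ℂ {y | ∃ i j, i < j ∧ y = Qeven n r k i j}) :
    L = gradedPiece n r := by
  funext m
  obtain rfl | ⟨k, rfl | rfl⟩ : m = 0 ∨ ∃ k, m = 2 * k + 1 ∨ m = 2 * k + 2 := by
    rcases Nat.even_or_odd' m with ⟨k, rfl | rfl⟩
    · rcases k with _ | k
      · exact .inl rfl
      · exact .inr ⟨k, .inr (by ring)⟩
    · exact .inr ⟨k, .inl rfl⟩
  · rw [h0, gradedPiece_zero]
  · rw [gradedPiece, gradedBasis_image_odd, ← hodd (k + 1) k.succ_pos]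
    rfl
  · rw [gradedPiece, gradedBasis_image_even, ← heven (k + 1) k.succ_pos]
    rfl

lemma Qodd_mem_gradedPiece (k : ℕ) (l : Fin n) :
    Qodd n r (k + 1) l ∈ gradedPiece n r (2 * k + 1) :=
  subset_span ⟨(.inl l, k), rfl, rfl⟩

lemma Qeven_mem_gradedPiece (k : ℕ) (i j : Fin n) :
    Qeven n r (k + 1) i j ∈ gradedPiece n r (2 * k + 2) := by
  rcases lt_trichotomy i j with h | rfl | h
  · exact subset_span ⟨(.inr ⟨(i, j), h⟩, k), rfl, rfl⟩
  · rw [Qeven_self]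
    exact zero_mem _
  · rw [Qeven_swap]
    exact neg_mem (subset_span ⟨(.inr ⟨(j, i), h⟩, k), rfl, rfl⟩)

lemma Qodd_sub_smul_mem (k : ℕ) (c : ℂ) (l : Fin n) :
    Qodd n r (k + 2) l - c • Qodd n r (k + 1) l ∈
      gradedPiece n r (2 * k + 3) ⊔ gradedPiece n r (2 * k + 1) :=
  sub_mem (mem_sup_left (Qodd_mem_gradedPiece (k + 1) l))
    (mem_sup_right (smul_mem _ c (Qodd_mem_gradedPiece k l)))

lemma Qeven_sub_smul_mem (k : ℕ) (c : ℂ) (i j : Fin n) :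
    Qeven n r (k + 2) i j - c • Qeven n r (k + 1) i j ∈
      gradedPiece n r (2 * k + 4) ⊔ gradedPiece n r (2 * k + 2) :=
  sub_mem (mem_sup_left (Qeven_mem_gradedPiece (k + 1) i j))
    (mem_sup_right (smul_mem _ c (Qeven_mem_gradedPiece k i j)))

lemma lie_Qeven_Qodd_mem (k k' : ℕ) (i j l : Fin n) :
    ⁅Qeven n r (k + 1) i j, Qodd n r (k' + 1) l⁆ ∈
      gradedPiece n r (2 * (k + k') + 3) ⊔ gradedPiece n r (2 * (k + k') + 1) := by
  rw [lie_Qeven_Qodd]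
  refine sub_mem ?_ ?_ <;> split_ifs <;>
    first | exact Qodd_sub_smul_mem _ _ _ | exact zero_mem _

lemma lie_Qeven_Qeven_mem (k k' : ℕ) (i j l m : Fin n) :
    ⁅Qeven n r (k + 1) i j, Qeven n r (k' + 1) l m⁆ ∈
      gradedPiece n r (2 * (k + k') + 4) ⊔ gradedPiece n r (2 * (k + k') + 2) := by
  rw [lie_Qeven_Qeven]
  refine add_mem (sub_mem (sub_mem ?_ ?_) ?_) ?_ <;> split_ifs <;>
    first | exact Qeven_sub_smul_mem _ _ _ _ | exact zero_mem _

lemma lie_gradedBasis_mem (a b : BasisIdx n × ℕ) :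
    ⁅gradedBasis n r a, gradedBasis n r b⁆ ∈
      gradedPiece n r (basisDeg n a + basisDeg n b) ⊔
        gradedPiece n r (basisDeg n a + basisDeg n b - 2) := by
  rcases a with ⟨_ | ⟨⟨i, j⟩, _⟩, k⟩ <;> rcases b with ⟨_ | ⟨⟨i', j'⟩, _⟩, k'⟩ <;>
    simp only [gradedBasis, basisDeg]
  · refine mem_sup_left ?_
    rw [lie_Qodd_Qodd, show 2 * k + 1 + (2 * k' + 1) = 2 * (k + k') + 2 by ring]
    exact Qeven_mem_gradedPiece _ _ _
  · rw [← lie_skew, show 2 * k + 1 + (2 * k' + 2) = 2 * (k' + k) + 3 by ring,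
      show 2 * (k' + k) + 3 - 2 = 2 * (k' + k) + 1 by omega]
    exact neg_mem (lie_Qeven_Qodd_mem _ _ _ _ _)
  · rw [show 2 * k + 2 + (2 * k' + 1) = 2 * (k + k') + 3 by ring,
      show 2 * (k + k') + 3 - 2 = 2 * (k + k') + 1 by omega]
    exact lie_Qeven_Qodd_mem _ _ _ _ _
  · rw [show 2 * k + 2 + (2 * k' + 2) = 2 * (k + k') + 4 by ring,
      show 2 * (k + k') + 4 - 2 = 2 * (k + k') + 2 by omega]
    exact lie_Qeven_Qeven_mem _ _ _ _ _ _

lemma lie_mem_gradedPiece {i j : ℕ} {x y : LLM n r} (hx : x ∈ gradedPiece n r i)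
    (hy : y ∈ gradedPiece n r j) :
    ⁅x, y⁆ ∈ gradedPiece n r (i + j) ⊔ gradedPiece n r (i + j - 2) := by
  refine lie_mem_of_mem_span ?_ hx hy
  rintro _ ⟨a, rfl, rfl⟩ _ ⟨b, rfl, rfl⟩
  exact lie_gradedBasis_mem a b

lemma Qodd_mem_lieSpan (hn : 2 ≤ n) (k : ℕ) (l : Fin n) :
    Qodd n r (k + 1) l ∈ lieSpan ℂ (LLM n r) (Set.range (Qgen n r)) := by
  have hgen : ∀ j, Qodd n r 1 j ∈ lieSpan ℂ (LLM n r) (Set.range (Qgen n r)) := fun j =>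
    subset_lieSpan ⟨j, by rw [Qgen_eq_Qodd_one]⟩
  induction k generalizing l with
  | zero => exact hgen l
  | succ k ih =>
    have := Fin.nontrivial_iff_two_le.mpr hn
    obtain ⟨j, hj⟩ := exists_ne l
    -- `Q^{2k+3}_l = [[Q^{2k+1}_l, Q^1_j], Q^1_j] + r_j Q^{2k+1}_l` for any `j ≠ l`
    have h := lie_Qeven_Qodd (r := r) k 0 l j j
    rw [if_pos rfl, if_neg hj.symm, sub_zero, add_zero, ← lie_Qodd_Qodd k 0] at h
    rw [← sub_add_cancel (Qodd n r (k + 2) l) (r j • Qodd n r (k + 1) l), ← h]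
    exact add_mem (lie_mem _ (lie_mem _ (ih l) (hgen j)) (hgen j)) (smul_mem _ _ (ih l))

lemma gradedBasis_mem_lieSpan (hn : 2 ≤ n) (a : BasisIdx n × ℕ) :
    gradedBasis n r a ∈ lieSpan ℂ (LLM n r) (Set.range (Qgen n r)) := by
  rcases a with ⟨l | ⟨⟨i, j⟩, _⟩, k⟩
  · exact Qodd_mem_lieSpan hn k l
  · have h := lie_Qodd_Qodd (r := r) k 0 i j
    rw [add_zero] at h
    rw [gradedBasis, ← h]
    exact lie_mem _ (Qodd_mem_lieSpan hn k i) (Qodd_mem_lieSpan hn 0 j)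

lemma lieSpan_Qgen_eq_iSup (hn : 2 ≤ n) :
    (lieSpan ℂ (LLM n r) (Set.range (Qgen n r)) : Submodule ℂ (LLM n r)) =
      ⨆ m, gradedPiece n r m := by
  rw [iSup_gradedPiece]
  refine le_antisymm (lieSpan_le_span ?_ ?_) (span_le.mpr ?_)
  · rintro _ ⟨l, rfl⟩
    rw [Qgen_eq_Qodd_one]
    exact subset_span ⟨(.inl l, 0), rfl⟩
  · rintro _ ⟨a, rfl⟩ _ ⟨b, rfl⟩
    rw [← iSup_gradedPiece]
    exact sup_le (le_iSup (gradedPiece n r) _) (le_iSup (gradedPiece n r) _)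
      (lie_gradedBasis_mem a b)
  · rintro _ ⟨a, rfl⟩
    exact gradedBasis_mem_lieSpan hn a

lemma finrank_span_Qodd (k : ℕ) :
    Module.finrank ℂ (span ℂ {y | ∃ l, y = Qodd n r (k + 1) l}) = n := by
  have hli : LinearIndependent ℂ (Qodd n r (k + 1)) :=
    linearIndependent_gradedBasis.comp (fun l => (.inl l, k)) fun l l' h => by simpa using h
  have hset : {y | ∃ l, y = Qodd n r (k + 1) l} = Set.range (Qodd n r (k + 1)) := by
    ext
    simp [eq_comm]
  rw [hset, finrank_span_eq_card hli, Fintype.card_fin]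

lemma finrank_span_Qeven (k : ℕ) :
    Module.finrank ℂ (span ℂ {y | ∃ i j, i < j ∧ y = Qeven n r (k + 1) i j}) =
      n * (n - 1) / 2 := by
  let e : {p : Fin n × Fin n // p.1 < p.2} → LLM n r := fun p => Qeven n r (k + 1) p.1.1 p.1.2
  have hli : LinearIndependent ℂ e :=
    linearIndependent_gradedBasis.comp (fun p => (.inr p, k)) fun p p' h => by simpa using h
  have hset : {y | ∃ i j, i < j ∧ y = Qeven n r (k + 1) i j} = Set.range e := by
    ext y
    constructor
    · rintro ⟨i, j, hij, rfl⟩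
      exact ⟨⟨(i, j), hij⟩, rfl⟩
    · rintro ⟨⟨⟨i, j⟩, hij⟩, rfl⟩
      exact ⟨i, j, hij, rfl⟩
  rw [hset, finrank_span_eq_card hli, Fintype.card_subtype, Fintype.card_product_filter_lt,
    Fintype.card_fin, Nat.choose_two_right]

end LL

end

theorem stmt_9_general (n : ℕ) [NeZero n] (hn : 3 ≤ n) (r : Fin n → ℂ)
    (Lbar : ℕ → Submodule ℂ (LLM n r))
    (hLbar0 : Lbar 0 = ⊥)
    (hLbarOdd : ∀ k : ℕ, 1 ≤ k →
      Lbar (2*k - 1) = Submodule.span ℂ {y | ∃ l : Fin n, y = Qodd n r k l})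
    (hLbarEven : ∀ k : ℕ, 1 ≤ k →
      Lbar (2*k) = Submodule.span ℂ {y | ∃ i j : Fin n, i < j ∧ y = Qeven n r k i j}) :
    -- L(n) is the (direct) sum of the Lbar m
    (∀ x : LLM n r,
        x ∈ LieSubalgebra.lieSpan ℂ (LLM n r) (Set.range (Qgen n r)) ↔ x ∈ ⨆ m, Lbar m) ∧
    iSupIndep Lbar ∧
    -- quasigraded structure
    (∀ i j : ℕ, 1 ≤ i → 1 ≤ j → ∀ x ∈ Lbar i, ∀ y ∈ Lbar j,
        ⁅x, y⁆ ∈ Lbar (i + j) ⊔ Lbar (i + j - 2)) ∧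
    -- dimensions
    (∀ k : ℕ, 1 ≤ k → Module.finrank ℂ (Lbar (2*k - 1)) = n ∧
        Module.finrank ℂ (Lbar (2*k)) = n * (n-1) / 2) := by
  obtain rfl := LL.eq_gradedPiece Lbar hLbar0 hLbarOdd hLbarEven
  refine ⟨fun x => ?_, LL.iSupIndep_gradedPiece,
    fun i j _ _ x hx y hy => LL.lie_mem_gradedPiece hx hy, fun k hk => ?_⟩
  · rw [← LL.lieSpan_Qgen_eq_iSup (by omega)]
    rfl
  · obtain ⟨k, rfl⟩ := Nat.exists_eq_add_of_le' hk
    rw [hLbarOdd _ hk, hLbarEven _ hk]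
    exact ⟨LL.finrank_span_Qodd k, LL.finrank_span_Qeven k⟩

theorem stmt_9 (n : ℕ) [NeZero n] (hn : 3 ≤ n) (r : Fin n → ℂ) (hr : Function.Injective r)
    (Lbar : ℕ → Submodule ℂ (LLM n r))
    (hLbar0 : Lbar 0 = ⊥)
    (hLbarOdd : ∀ k : ℕ, 1 ≤ k →
      Lbar (2*k - 1) = Submodule.span ℂ {y | ∃ l : Fin n, y = Qodd n r k l})
    (hLbarEven : ∀ k : ℕ, 1 ≤ k →
      Lbar (2*k) = Submodule.span ℂ {y | ∃ i j : Fin n, i < j ∧ y = Qeven n r k i j}) :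
    -- L(n) is the (direct) sum of the Lbar m
    (∀ x : LLM n r,
        x ∈ LieSubalgebra.lieSpan ℂ (LLM n r) (Set.range (Qgen n r)) ↔ x ∈ ⨆ m, Lbar m) ∧
    iSupIndep Lbar ∧
    -- quasigraded structure
    (∀ i j : ℕ, 1 ≤ i → 1 ≤ j → ∀ x ∈ Lbar i, ∀ y ∈ Lbar j,
        ⁅x, y⁆ ∈ Lbar (i + j) ⊔ Lbar (i + j - 2)) ∧
    -- dimensions
    (∀ k : ℕ, 1 ≤ k → Module.finrank ℂ (Lbar (2*k - 1)) = n ∧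
        Module.finrank ℂ (Lbar (2*k)) = n * (n-1) / 2) :=
  stmt_9_general n hn r Lbar hLbar0 hLbarOdd hLbarEven
end

section
/- Let g(n) be the quotient of the free Lie algebra on generators p_1,...,p_n by the relations [p_i,[p_i,p_k]] − [p_j,[p_j,p_k]] = (rj − ri)·p_k (for i ≠ k, j ≠ k) and [p_i,[p_j,p_k]] = 0 (for i, j, k pairwise distinct). Then the map p_i ↦ Q_i extends to a surjective Lie algebra homomorphism φ : g(n) → L(n). -/
open MvPolynomial Matrix

attribute [local instance 100] LieRing.ofAssociativeRing

noncomputable section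

def gRel (n : ℕ) (r : Fin n → ℂ) : Set (FreeLieAlgebra ℂ (Fin n)) :=
  {x | ∃ i j k : Fin n, i ≠ k ∧ j ≠ k ∧
        x = ⁅FreeLieAlgebra.of ℂ i, ⁅FreeLieAlgebra.of ℂ i, FreeLieAlgebra.of ℂ k⁆⁆
            - ⁅FreeLieAlgebra.of ℂ j, ⁅FreeLieAlgebra.of ℂ j, FreeLieAlgebra.of ℂ k⁆⁆
            - (r j - r i) • FreeLieAlgebra.of ℂ k} ∪
  {x | ∃ i j k : Fin n, i ≠ j ∧ i ≠ k ∧ j ≠ k ∧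
        x = ⁅FreeLieAlgebra.of ℂ i, ⁅FreeLieAlgebra.of ℂ j, FreeLieAlgebra.of ℂ k⁆⁆}

def gIdeal (n : ℕ) (r : Fin n → ℂ) : LieIdeal ℂ (FreeLieAlgebra ℂ (Fin n)) :=
  LieSubmodule.lieSpan ℂ (FreeLieAlgebra ℂ (Fin n)) (gRel n r)

abbrev gLL (n : ℕ) (r : Fin n → ℂ) : Type := FreeLieAlgebra ℂ (Fin n) ⧸ gIdeal n r

def pgen (n : ℕ) (r : Fin n → ℂ) (i : Fin n) : gLL n r :=
  LieSubmodule.Quotient.mk (N := gIdeal n r) (FreeLieAlgebra.of ℂ i)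


end

/-!
The assignment `pᵢ ↦ Qᵢ` extends to the free Lie algebra, and the relations of `g(n)` hold in
`so(n,1) ⊗ Q`: for `i ≠ k` one computes `[Qᵢ, [Qᵢ, Qₖ]] = λ̄ᵢ² Qₖ`, and `λ̄ᵢ² − λ̄ⱼ² = rⱼ − rᵢ` in `Q`,
while `[Qᵢ, [Qⱼ, Qₖ]] = 0` for pairwise distinct indices because the matrix units involved do not
meet. So the map factors through `g(n)`; its image is a Lie subalgebra containing every `Qᵢ`,
hence all of `L(n)`.
-/

namespace LieIdeal

variable {R L L' : Type*} [CommRing R] [LieRing L] [LieAlgebra R L] [LieRing L'] [LieAlgebra R L']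

def liftQ (I : LieIdeal R L) (f : L →ₗ⁅R⁆ L') (h : I ≤ f.ker) : L ⧸ I →ₗ⁅R⁆ L' :=
  { Submodule.liftQ I.toSubmodule (f : L →ₗ[R] L') fun x hx => LieHom.mem_ker.mp (h hx) with
    map_lie' := by
      rintro ⟨x⟩ ⟨y⟩
      exact f.map_lie x y }

@[simp]
theorem liftQ_mk (I : LieIdeal R L) (f : L →ₗ⁅R⁆ L') (h : I ≤ f.ker) (x : L) :
    I.liftQ f h (LieSubmodule.Quotient.mk x) = f x :=
  rfl

end LieIdeal

theorem LieSubalgebra.surjective_of_subset_range {R L L' : Type*} [CommRing R] [LieRing L]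
    [LieAlgebra R L] [LieRing L'] [LieAlgebra R L'] {s : Set L'}
    (f : L →ₗ⁅R⁆ lieSpan R L' s) (h : s ⊆ Set.range fun x => (f x : L')) :
    Function.Surjective f := by
  rw [← LieHom.range_eq_top, eq_top_iff, ← lieSpan_lieSpan_coe_preimage, lieSpan_le]
  rintro ⟨x, -⟩ (hx : x ∈ s)
  obtain ⟨y, hy⟩ := h hx
  exact ⟨y, Subtype.ext hy⟩

-- In `so(n,1)` with time index `N`, `single i N 1 + single N i 1` is the boost along `i` and
-- `single i k 1 - single k i 1` the rotation in the `ik`-plane.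
section Boosts

variable {α ι : Type*} [CommRing α] [Fintype ι] [DecidableEq ι] {i j k N : ι}

theorem Matrix.lie_smul_smul_s10 (a b : α) (A B : Matrix ι ι α) :
    ⁅a • A, b • B⁆ = (a * b) • ⁅A, B⁆ := by
  rw [Ring.lie_def, Ring.lie_def, smul_mul_smul_comm, smul_mul_smul_comm, mul_comm b, smul_sub]

theorem lie_boost_boost (hik : i ≠ k) (hiN : i ≠ N) (hkN : k ≠ N) :
    ⁅single i N (1 : α) + single N i 1, single k N (1 : α) + single N k 1⁆ =
      single i k 1 - single k i 1 := by
  simp [Ring.lie_def, add_mul, mul_add, single_mul_single_of_ne, hik, hiN, hkN, hik.symm, hiN.symm,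
    hkN.symm]

theorem lie_boost_rotation (hik : i ≠ k) (hiN : i ≠ N) (hkN : k ≠ N) :
    ⁅single i N (1 : α) + single N i 1, single i k (1 : α) - single k i 1⁆ =
      single k N 1 + single N k 1 := by
  simp only [Ring.lie_def, mul_sub, add_mul, mul_add, sub_mul, single_mul_single_same, mul_one,
    single_mul_single_of_ne, ne_eq, not_false_eq_true, hik, hiN, hkN, hik.symm, hiN.symm, hkN.symm,
    zero_add, add_zero, sub_zero, zero_sub, sub_self, sub_neg_eq_add]
  abel

theorem lie_boost_rotation_of_ne (hij : i ≠ j) (hik : i ≠ k) (hjN : j ≠ N) (hkN : k ≠ N) :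
    ⁅single i N (1 : α) + single N i 1, single j k (1 : α) - single k j 1⁆ = 0 := by
  simp [Ring.lie_def, add_mul, mul_add, sub_mul, mul_sub, single_mul_single_of_ne, hij, hik, hjN,
    hkN, hij.symm, hik.symm, hjN.symm, hkN.symm]

end Boosts

section Qgen

variable (n : ℕ) (r : Fin n → ℂ)

theorem lamQ_sq_sub_lamQ_sq (i j : Fin n) :
    lamQ n r i ^ 2 - lamQ n r j ^ 2 = algebraMap ℂ (LLQ n r) (r j - r i) := by
  have h : (X i ^ 2 - X j ^ 2 + C (r i) - C (r j) : MvPolynomial (Fin n) ℂ) ∈ LLIdeal n r :=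
    Ideal.subset_span ⟨i, j, rfl⟩
  rw [← Ideal.Quotient.eq_zero_iff_mem] at h
  simp only [map_sub, map_add, map_pow, ← MvPolynomial.algebraMap_eq,
    Ideal.Quotient.mk_algebraMap] at h
  rw [map_sub]
  unfold lamQ
  linear_combination h

variable {n}

theorem Qgen_eq (i : Fin n) : Qgen n r i = lamQ n r i •
    (single i.castSucc (Fin.last n) (1 : LLQ n r) + single (Fin.last n) i.castSucc 1) :=
  rfl

theorem lie_Qgen_Qgen {i k : Fin n} (hik : i ≠ k) :
    ⁅Qgen n r i, Qgen n r k⁆ = (lamQ n r i * lamQ n r k) •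
      (single i.castSucc k.castSucc (1 : LLQ n r) - single k.castSucc i.castSucc 1) := by
  rw [Qgen_eq, Qgen_eq, Matrix.lie_smul_smul_s10,
    lie_boost_boost (Fin.castSucc_injective n |>.ne hik) (Fin.castSucc_lt_last i).ne
      (Fin.castSucc_lt_last k).ne]

theorem lie_Qgen_lie_Qgen_Qgen_self {i k : Fin n} (hik : i ≠ k) :
    ⁅Qgen n r i, ⁅Qgen n r i, Qgen n r k⁆⁆ = lamQ n r i ^ 2 • Qgen n r k := by
  rw [lie_Qgen_Qgen r hik, Qgen_eq r i, Matrix.lie_smul_smul_s10,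
    lie_boost_rotation (Fin.castSucc_injective n |>.ne hik) (Fin.castSucc_lt_last i).ne
      (Fin.castSucc_lt_last k).ne, Qgen_eq, smul_smul, sq, mul_assoc]

theorem lie_Qgen_lie_Qgen_Qgen_of_ne {i j k : Fin n} (hij : i ≠ j) (hik : i ≠ k) (hjk : j ≠ k) :
    ⁅Qgen n r i, ⁅Qgen n r j, Qgen n r k⁆⁆ = 0 := by
  rw [lie_Qgen_Qgen r hjk, Qgen_eq r i, Matrix.lie_smul_smul_s10,
    lie_boost_rotation_of_ne (Fin.castSucc_injective n |>.ne hij)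
      (Fin.castSucc_injective n |>.ne hik) (Fin.castSucc_lt_last j).ne
      (Fin.castSucc_lt_last k).ne, smul_zero]

end Qgen

section Presentation

variable (n : ℕ) (r : Fin n → ℂ)

noncomputable def liftQgen :
    FreeLieAlgebra ℂ (Fin n) →ₗ⁅ℂ⁆ LieSubalgebra.lieSpan ℂ (LLM n r) (Set.range (Qgen n r)) :=
  FreeLieAlgebra.lift ℂ fun i => ⟨Qgen n r i, LieSubalgebra.subset_lieSpan ⟨i, rfl⟩⟩

variable {n}

@[simp]
theorem coe_liftQgen_of (i : Fin n) :
    (liftQgen n r (FreeLieAlgebra.of ℂ i) : LLM n r) = Qgen n r i := by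
  rw [liftQgen, FreeLieAlgebra.lift_of_apply]

theorem gIdeal_le_ker_liftQgen : gIdeal n r ≤ (liftQgen n r).ker := by
  rw [gIdeal, LieSubmodule.lieSpan_le]
  rintro x (⟨i, j, k, hik, hjk, rfl⟩ | ⟨i, j, k, hij, hik, hjk, rfl⟩) <;>
    rw [SetLike.mem_coe, LieHom.mem_ker, ← Subtype.coe_inj] <;>
    simp only [map_sub, map_smul, LieHom.map_lie, AddSubgroupClass.coe_sub, SetLike.val_smul,
      LieSubalgebra.coe_bracket, coe_liftQgen_of, ZeroMemClass.coe_zero]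
  · rw [lie_Qgen_lie_Qgen_Qgen_self r hik, lie_Qgen_lie_Qgen_Qgen_self r hjk,
      ← algebraMap_smul (LLQ n r) (r j - r i), ← lamQ_sq_sub_lamQ_sq]
    module
  · exact lie_Qgen_lie_Qgen_Qgen_of_ne r hij hik hjk

end Presentation

theorem stmt_10_general (n : ℕ) (r : Fin n → ℂ) :
    ∃ φ : gLL n r →ₗ⁅ℂ⁆ (LieSubalgebra.lieSpan ℂ (LLM n r) (Set.range (Qgen n r))),
      (∀ i : Fin n, (φ (pgen n r i) : LLM n r) = Qgen n r i) ∧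
      Function.Surjective φ := by
  let φ := (gIdeal n r).liftQ (liftQgen n r) (gIdeal_le_ker_liftQgen r)
  have hφ (i : Fin n) : (φ (pgen n r i) : LLM n r) = Qgen n r i := by
    rw [pgen, LieIdeal.liftQ_mk, coe_liftQgen_of]
  refine ⟨φ, hφ, LieSubalgebra.surjective_of_subset_range φ ?_⟩
  rintro _ ⟨i, rfl⟩
  exact ⟨pgen n r i, hφ i⟩

theorem stmt_10 (n : ℕ) [NeZero n] (hn : 3 ≤ n) (r : Fin n → ℂ) (hr : Function.Injective r) :
    ∃ φ : gLL n r →ₗ⁅ℂ⁆ (LieSubalgebra.lieSpan ℂ (LLM n r) (Set.range (Qgen n r))),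
      (∀ i : Fin n, (φ (pgen n r i) : LLM n r) = Qgen n r i) ∧
      Function.Surjective φ :=
  stmt_10_general n r
end
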